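/- arXiv:1101.2081 — 4 statements merged into one kernel-verified Lean document; each statement's English description precedes it below -/
import Mathlib

section
/- Recombination before a link does not affect trailing marginals: for links $\beta \le \alpha$ and any nonnegative measure $\omega$ with $\|\omega\| \neq 0$, $\pi_{>\alpha}.(R_\beta(\omega)) = \pi_{>\alpha}.\omega$. -/
open Finset

variable {n : ℕ}

/-- Total mass of a population. -/
noncomputable def mass {X : Fin (n+1) → Type*} [∀ i, Fintype (X i)]
    (ω : (∀ i, X i) → ℝ) : ℝ := ∑ x, ω x

/-- Leading marginal `π_{<α}.ω`, encoded as a function on full types that only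
depends on the coordinates at sites `≤ α`. -/
noncomputable def margLe {X : Fin (n+1) → Type*} [∀ i, Fintype (X i)] [∀ i, DecidableEq (X i)]
    (α : Fin n) (ω : (∀ i, X i) → ℝ) : (∀ i, X i) → ℝ :=
  fun x => ∑ y, if ∀ i : Fin (n+1), (i : ℕ) ≤ (α : ℕ) → y i = x i then ω y else 0

/-- Trailing marginal `π_{>α}.ω`. -/
noncomputable def margGt {X : Fin (n+1) → Type*} [∀ i, Fintype (X i)] [∀ i, DecidableEq (X i)]
    (α : Fin n) (ω : (∀ i, X i) → ℝ) : (∀ i, X i) → ℝ :=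
  fun x => ∑ y, if ∀ i : Fin (n+1), (α : ℕ) < (i : ℕ) → y i = x i then ω y else 0

/-- Single-site marginal `π_i.ω`. -/
noncomputable def margAt {X : Fin (n+1) → Type*} [∀ i, Fintype (X i)] [∀ i, DecidableEq (X i)]
    (i : Fin (n+1)) (ω : (∀ i, X i) → ℝ) : (∀ i, X i) → ℝ :=
  fun x => ∑ y, if y i = x i then ω y else 0

/-- Elementary recombinator at link `α` (the link between sites `α` and `α+1`). -/
noncomputable def reco {X : Fin (n+1) → Type*} [∀ i, Fintype (X i)] [∀ i, DecidableEq (X i)]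
    (α : Fin n) (ω : (∀ i, X i) → ℝ) : (∀ i, X i) → ℝ :=
  fun x => (mass ω)⁻¹ * (margLe α ω x * margGt α ω x)

/-- Composite recombinator `R_G`: composition of the elementary recombinators over `G`. -/
noncomputable def recoSet {X : Fin (n+1) → Type*} [∀ i, Fintype (X i)] [∀ i, DecidableEq (X i)]
    (G : Finset (Fin n)) (ω : (∀ i, X i) → ℝ) : (∀ i, X i) → ℝ :=
  (G.sort (· ≤ ·)).foldr (fun α ω' => reco α ω') ω

theorem margGt_reco {X : Fin (n+1) → Type*} [∀ i, Fintype (X i)] [∀ i, DecidableEq (X i)]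
    [∀ i, Nonempty (X i)]
    (ω : (∀ i, X i) → ℝ) (hω : ∀ x, 0 ≤ ω x) (hm : mass ω ≠ 0)
    (α β : Fin n) (hβα : β ≤ α) :
    margGt α (reco β ω) = margGt α ω := by
  classical
  funext x
  have hba : (β : ℕ) ≤ (α : ℕ) := hβα
  have expand : ∀ y : ∀ i, X i, margLe β ω y * margGt β ω y =
      ∑ u, ∑ v, (if ∀ i : Fin (n+1), (i:ℕ) ≤ (β:ℕ) → u i = y i then ω u else 0) *
        (if ∀ i : Fin (n+1), (β:ℕ) < (i:ℕ) → v i = y i then ω v else 0) := by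
    intro y
    rw [margLe, margGt, Finset.sum_mul_sum]
  have inner : ∀ u v : ∀ i, X i,
      (∑ y : ∀ i, X i, (if ∀ i : Fin (n+1), (α:ℕ) < (i:ℕ) → y i = x i then
        (if ∀ i : Fin (n+1), (i:ℕ) ≤ (β:ℕ) → u i = y i then ω u else 0) *
        (if ∀ i : Fin (n+1), (β:ℕ) < (i:ℕ) → v i = y i then ω v else 0) else 0))
      = (if ∀ i : Fin (n+1), (α:ℕ) < (i:ℕ) → v i = x i then ω u * ω v else 0) := by
    intro u v
    set y₀ : ∀ i, X i := fun i => if (i:ℕ) ≤ (β:ℕ) then u i else v i with hy₀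
    rw [Finset.sum_eq_single y₀]
    · have h1 : ∀ i : Fin (n+1), (i:ℕ) ≤ (β:ℕ) → u i = y₀ i := by
        intro i hi; simp [hy₀, hi]
      have h2 : ∀ i : Fin (n+1), (β:ℕ) < (i:ℕ) → v i = y₀ i := by
        intro i hi; simp [hy₀, Nat.not_le.mpr hi]
      have hv : ∀ i : Fin (n+1), (α:ℕ) < (i:ℕ) → y₀ i = v i := by
        intro i hi
        have : ¬ (i:ℕ) ≤ (β:ℕ) := Nat.not_le.mpr (lt_of_le_of_lt hba hi)
        simp [hy₀, this]
      rw [if_pos h1, if_pos h2]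
      by_cases hc : ∀ i : Fin (n+1), (α:ℕ) < (i:ℕ) → v i = x i
      · rw [if_pos (fun i hi => (hv i hi).trans (hc i hi)), if_pos hc]
      · rw [if_neg (fun h => hc (fun i hi => (hv i hi).symm.trans (h i hi))), if_neg hc]
    · intro y _ hy
      by_cases h1 : ∀ i : Fin (n+1), (i:ℕ) ≤ (β:ℕ) → u i = y i
      · by_cases h2 : ∀ i : Fin (n+1), (β:ℕ) < (i:ℕ) → v i = y i
        · exact absurd (funext fun i => by
            by_cases hb : (i:ℕ) ≤ (β:ℕ)
            · rw [← h1 i hb]; simp [hy₀, hb]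
            · rw [← h2 i (Nat.not_le.mp hb)]; simp [hy₀, hb]) hy
        · simp [h2]
      · simp [h1]
    · intro h; exact absurd (Finset.mem_univ y₀) h
  have main : (∑ y : ∀ i, X i, if ∀ i : Fin (n+1), (α:ℕ) < (i:ℕ) → y i = x i then
      margLe β ω y * margGt β ω y else 0) = mass ω * margGt α ω x := by
    have step1 : (∑ y : ∀ i, X i, if ∀ i : Fin (n+1), (α:ℕ) < (i:ℕ) → y i = x i then
        margLe β ω y * margGt β ω y else 0)
        = ∑ y : ∀ i, X i, ∑ u, ∑ v, (if ∀ i : Fin (n+1), (α:ℕ) < (i:ℕ) → y i = x i then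
          (if ∀ i : Fin (n+1), (i:ℕ) ≤ (β:ℕ) → u i = y i then ω u else 0) *
          (if ∀ i : Fin (n+1), (β:ℕ) < (i:ℕ) → v i = y i then ω v else 0) else 0) := by
      refine Finset.sum_congr rfl fun y _ => ?_
      by_cases hc : ∀ i : Fin (n+1), (α:ℕ) < (i:ℕ) → y i = x i
      · rw [if_pos hc, expand y]
        exact Finset.sum_congr rfl fun u _ => Finset.sum_congr rfl fun v _ => (if_pos hc).symm
      · simp [hc]
    rw [step1, Finset.sum_comm]
    have step2 : ∀ u : ∀ i, X i,
        (∑ y : ∀ i, X i, ∑ v, (if ∀ i : Fin (n+1), (α:ℕ) < (i:ℕ) → y i = x i then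
          (if ∀ i : Fin (n+1), (i:ℕ) ≤ (β:ℕ) → u i = y i then ω u else 0) *
          (if ∀ i : Fin (n+1), (β:ℕ) < (i:ℕ) → v i = y i then ω v else 0) else 0))
        = ω u * margGt α ω x := by
      intro u
      rw [Finset.sum_comm]
      have := fun v => inner u v
      simp only [this]
      rw [margGt, Finset.mul_sum]
      refine Finset.sum_congr rfl fun v _ => ?_
      by_cases hc : ∀ i : Fin (n+1), (α:ℕ) < (i:ℕ) → v i = x i <;> simp [hc]
    simp only [step2]
    rw [← Finset.sum_mul, mass]
  conv_lhs => rw [margGt]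
  simp only [reco]
  have pull : ∀ y : ∀ i, X i,
      (if ∀ i : Fin (n+1), (α:ℕ) < (i:ℕ) → y i = x i then
        (mass ω)⁻¹ * (margLe β ω y * margGt β ω y) else 0)
      = (mass ω)⁻¹ * (if ∀ i : Fin (n+1), (α:ℕ) < (i:ℕ) → y i = x i then
        margLe β ω y * margGt β ω y else 0) := by
    intro y; split <;> simp
  simp only [pull]
  rw [← Finset.mul_sum, main, ← mul_assoc, inv_mul_cancel₀ hm, one_mul]
end

section
/- Recombinators commute: $R_\alpha(R_\beta(\omega)) = R_\beta(R_\alpha(\omega))$ for all links $\alpha, \beta$ and every nonnegative measure $\omega$ with $\|\omega\| \neq 0$. -/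
open Finset

variable {n : ℕ}

section Aux

variable {X : Fin (n+1) → Type*} [∀ i, Fintype (X i)] [∀ i, DecidableEq (X i)]

private lemma ite_zero_eq (P : Prop) [Decidable P] (t : ℝ) :
    (if P then t else 0) = (if P then (1:ℝ) else 0) * t := by split <;> simp

private lemma chi_and (P Q : Prop) [Decidable P] [Decidable Q] :
    (if P then (1:ℝ) else 0) * (if Q then (1:ℝ) else 0) = if P ∧ Q then (1:ℝ) else 0 := by
  by_cases hP : P <;> by_cases hQ : Q <;> simp [hP, hQ]

private lemma key (ω : (∀ i, X i) → ℝ) (r : ℝ)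
    (C : (∀ i, X i) → Prop) (A B : (∀ i, X i) → (∀ i, X i) → Prop)
    (P Q : (∀ i, X i) → Prop) (y₀ : (∀ i, X i) → (∀ i, X i) → (∀ i, X i))
    [DecidablePred C] [∀ u y, Decidable (A u y)] [∀ v y, Decidable (B v y)]
    [DecidablePred P] [DecidablePred Q]
    (h : ∀ y u v, (C y ∧ A u y ∧ B v y) ↔ (P u ∧ Q v ∧ y = y₀ u v)) :
    ∑ y, (if C y then r * ((∑ u, if A u y then ω u else 0) * (∑ v, if B v y then ω v else 0)) else 0)
      = r * ((∑ u, if P u then ω u else 0) * (∑ v, if Q v then ω v else 0)) := by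
  have step1 : ∑ y, (if C y then r * ((∑ u, if A u y then ω u else 0) * (∑ v, if B v y then ω v else 0)) else 0)
      = ∑ y, ∑ u, ∑ v, ((if C y then (1:ℝ) else 0) * (if A u y then (1:ℝ) else 0) *
          (if B v y then (1:ℝ) else 0)) * (r * (ω u * ω v)) := by
    refine Finset.sum_congr rfl fun y _ => ?_
    rw [ite_zero_eq, Finset.sum_mul_sum]
    simp only [Finset.mul_sum]
    refine Finset.sum_congr rfl fun u _ => Finset.sum_congr rfl fun v _ => ?_
    rw [ite_zero_eq (A u y), ite_zero_eq (B v y)]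
    ring
  rw [step1, Finset.sum_comm]
  have step2 : ∀ u ∈ (univ : Finset (∀ i, X i)),
      ∑ y, ∑ v, ((if C y then (1:ℝ) else 0) * (if A u y then (1:ℝ) else 0) *
          (if B v y then (1:ℝ) else 0)) * (r * (ω u * ω v))
      = ∑ v, (if P u then (1:ℝ) else 0) * (if Q v then (1:ℝ) else 0) * (r * (ω u * ω v)) := by
    intro u _
    rw [Finset.sum_comm]
    refine Finset.sum_congr rfl fun v _ => ?_
    have hterm : ∀ y, ((if C y then (1:ℝ) else 0) * (if A u y then (1:ℝ) else 0) *
          (if B v y then (1:ℝ) else 0))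
        = (if P u then (1:ℝ) else 0) * (if Q v then (1:ℝ) else 0) *
          (if y = y₀ u v then (1:ℝ) else 0) := by
      intro y
      rw [mul_assoc, chi_and, chi_and, mul_assoc, chi_and, chi_and]
      exact if_congr (h y u v) rfl rfl
    simp only [hterm]
    rw [← Finset.sum_mul, ← Finset.mul_sum, Finset.sum_ite_eq' univ (y₀ u v) (fun _ => (1:ℝ))]
    simp
  rw [Finset.sum_congr rfl step2]
  rw [Finset.sum_mul_sum (univ) (univ) (fun u => if P u then ω u else 0) (fun v => if Q v then ω v else 0), Finset.mul_sum]
  refine Finset.sum_congr rfl fun u _ => ?_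
  rw [Finset.mul_sum]
  refine Finset.sum_congr rfl fun v _ => ?_
  by_cases hP : P u <;> by_cases hQ : Q v <;> simp [hP, hQ] <;> ring

private lemma mass_reco (ω : (∀ i, X i) → ℝ) (hm : mass ω ≠ 0) (γ : Fin n) :
    mass (reco γ ω) = mass ω := by
  have h : ∀ y u v : (∀ i, X i),
      (True ∧ (∀ i : Fin (n+1), (i:ℕ) ≤ (γ:ℕ) → u i = y i) ∧
        (∀ i : Fin (n+1), (γ:ℕ) < (i:ℕ) → v i = y i)) ↔
      (True ∧ True ∧ y = (fun u v => fun i : Fin (n+1) =>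
          if (i:ℕ) ≤ (γ:ℕ) then u i else v i) u v) := by
    intro y u v
    constructor
    · rintro ⟨-, h2, h3⟩
      refine ⟨trivial, trivial, funext fun i => ?_⟩
      by_cases hi : (i:ℕ) ≤ (γ:ℕ)
      · simp only [if_pos hi]; exact (h2 i hi).symm
      · simp only [if_neg hi]; exact (h3 i (by omega)).symm
    · rintro ⟨-, -, rfl⟩
      refine ⟨trivial, fun i hi => ?_, fun i hi => ?_⟩
      · simp only [if_pos hi]
      · simp only [if_neg (by omega : ¬ (i:ℕ) ≤ (γ:ℕ))]
  have h1 : mass (reco γ ω) = ∑ y : (∀ i, X i), (if True then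
      (mass ω)⁻¹ * ((∑ u, if ∀ i : Fin (n+1), (i:ℕ) ≤ (γ:ℕ) → u i = y i then ω u else 0) *
        (∑ v, if ∀ i : Fin (n+1), (γ:ℕ) < (i:ℕ) → v i = y i then ω v else 0)) else 0) := by
    refine Finset.sum_congr rfl fun y _ => ?_
    rw [if_pos trivial]; rfl
  rw [h1, key ω (mass ω)⁻¹ _ _ _ _ _ _ h]
  simp only [if_true]
  rw [show (∑ u : (∀ i, X i), ω u) = mass ω from rfl]
  field_simp

private lemma margLe_reco_le (ω : (∀ i, X i) → ℝ) (α β : Fin n) (hαβ : (α:ℕ) ≤ (β:ℕ))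
    (x : ∀ i, X i) :
    margLe α (reco β ω) x = (mass ω)⁻¹ * (margLe α ω x * mass ω) := by
  have h : ∀ y u v : (∀ i, X i),
      ((∀ i : Fin (n+1), (i:ℕ) ≤ (α:ℕ) → y i = x i) ∧
       (∀ i : Fin (n+1), (i:ℕ) ≤ (β:ℕ) → u i = y i) ∧
       (∀ i : Fin (n+1), (β:ℕ) < (i:ℕ) → v i = y i)) ↔
      ((∀ i : Fin (n+1), (i:ℕ) ≤ (α:ℕ) → u i = x i) ∧ True ∧
       y = (fun u v => fun i : Fin (n+1) =>
          if (i:ℕ) ≤ (α:ℕ) then x i else if (i:ℕ) ≤ (β:ℕ) then u i else v i) u v) := by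
    intro y u v
    constructor
    · rintro ⟨h1, h2, h3⟩
      refine ⟨fun i hi => (h2 i (le_trans hi hαβ)).trans (h1 i hi), trivial,
        funext fun i => ?_⟩
      by_cases hi : (i:ℕ) ≤ (α:ℕ)
      · simp only [if_pos hi]; exact h1 i hi
      · simp only [if_neg hi]
        by_cases hib : (i:ℕ) ≤ (β:ℕ)
        · simp only [if_pos hib]; exact (h2 i hib).symm
        · simp only [if_neg hib]; exact (h3 i (by omega)).symm
    · rintro ⟨hu, -, rfl⟩
      refine ⟨fun i hi => by simp only [if_pos hi], fun i hi => ?_, fun i hi => ?_⟩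
      · by_cases hia : (i:ℕ) ≤ (α:ℕ)
        · simp only [if_pos hia]; exact hu i hia
        · simp only [if_neg hia, if_pos hi]
      · simp only [if_neg (by omega : ¬ (i:ℕ) ≤ (α:ℕ)),
          if_neg (by omega : ¬ (i:ℕ) ≤ (β:ℕ))]
  have hk := key ω (mass ω)⁻¹ _ _ _ _ _ _ h
  show (∑ y : (∀ i, X i), if ∀ i : Fin (n+1), (i:ℕ) ≤ (α:ℕ) → y i = x i then reco β ω y else 0) = _
  rw [show (∑ y : (∀ i, X i), if ∀ i : Fin (n+1), (i:ℕ) ≤ (α:ℕ) → y i = x i then reco β ω y else 0)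
    = ∑ y : (∀ i, X i), (if ∀ i : Fin (n+1), (i:ℕ) ≤ (α:ℕ) → y i = x i then
      (mass ω)⁻¹ * ((∑ u, if ∀ i : Fin (n+1), (i:ℕ) ≤ (β:ℕ) → u i = y i then ω u else 0) *
        (∑ v, if ∀ i : Fin (n+1), (β:ℕ) < (i:ℕ) → v i = y i then ω v else 0)) else 0) from rfl,
    hk]
  simp only [if_true]
  rfl

private lemma margGt_reco_le (ω : (∀ i, X i) → ℝ) (α β : Fin n) (hαβ : (α:ℕ) ≤ (β:ℕ))
    (x : ∀ i, X i) :
    margGt α (reco β ω) x = (mass ω)⁻¹ *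
      ((∑ u : (∀ i, X i), if ∀ i : Fin (n+1), (α:ℕ) < (i:ℕ) → (i:ℕ) ≤ (β:ℕ) → u i = x i
          then ω u else 0) * margGt β ω x) := by
  have h : ∀ y u v : (∀ i, X i),
      ((∀ i : Fin (n+1), (α:ℕ) < (i:ℕ) → y i = x i) ∧
       (∀ i : Fin (n+1), (i:ℕ) ≤ (β:ℕ) → u i = y i) ∧
       (∀ i : Fin (n+1), (β:ℕ) < (i:ℕ) → v i = y i)) ↔
      ((∀ i : Fin (n+1), (α:ℕ) < (i:ℕ) → (i:ℕ) ≤ (β:ℕ) → u i = x i) ∧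
       (∀ i : Fin (n+1), (β:ℕ) < (i:ℕ) → v i = x i) ∧
       y = (fun u v => fun i : Fin (n+1) =>
          if (i:ℕ) ≤ (α:ℕ) then u i else x i) u v) := by
    intro y u v
    constructor
    · rintro ⟨h1, h2, h3⟩
      refine ⟨fun i hi1 hi2 => (h2 i hi2).trans (h1 i hi1), 
        fun i hi => (h3 i hi).trans (h1 i (by omega)), funext fun i => ?_⟩
      by_cases hi : (i:ℕ) ≤ (α:ℕ)
      · simp only [if_pos hi]; exact (h2 i (le_trans hi hαβ)).symm
      · simp only [if_neg hi]; exact h1 i (by omega)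
    · rintro ⟨hP, hQ, rfl⟩
      refine ⟨fun i hi => by simp only [if_neg (by omega : ¬ (i:ℕ) ≤ (α:ℕ))],
        fun i hi => ?_, fun i hi => ?_⟩
      · by_cases hia : (i:ℕ) ≤ (α:ℕ)
        · simp only [if_pos hia]
        · simp only [if_neg hia]; exact hP i (by omega) hi
      · simp only [if_neg (by omega : ¬ (i:ℕ) ≤ (α:ℕ))]; exact hQ i hi
  have hk := key ω (mass ω)⁻¹ _ _ _ _ _ _ h
  show (∑ y : (∀ i, X i),
      if ∀ i : Fin (n+1), (α:ℕ) < (i:ℕ) → y i = x i then reco β ω y else 0) = _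
  rw [show (∑ y : (∀ i, X i),
      if ∀ i : Fin (n+1), (α:ℕ) < (i:ℕ) → y i = x i then reco β ω y else 0)
    = ∑ y : (∀ i, X i), (if ∀ i : Fin (n+1), (α:ℕ) < (i:ℕ) → y i = x i then
      (mass ω)⁻¹ * ((∑ u, if ∀ i : Fin (n+1), (i:ℕ) ≤ (β:ℕ) → u i = y i then ω u else 0) *
        (∑ v, if ∀ i : Fin (n+1), (β:ℕ) < (i:ℕ) → v i = y i then ω v else 0)) else 0) from rfl,
    hk]
  rfl

private lemma margLe_reco_ge (ω : (∀ i, X i) → ℝ) (α β : Fin n) (hαβ : (α:ℕ) ≤ (β:ℕ))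
    (x : ∀ i, X i) :
    margLe β (reco α ω) x = (mass ω)⁻¹ *
      (margLe α ω x * (∑ v : (∀ i, X i),
        if ∀ i : Fin (n+1), (α:ℕ) < (i:ℕ) → (i:ℕ) ≤ (β:ℕ) → v i = x i then ω v else 0)) := by
  have h : ∀ y u v : (∀ i, X i),
      ((∀ i : Fin (n+1), (i:ℕ) ≤ (β:ℕ) → y i = x i) ∧
       (∀ i : Fin (n+1), (i:ℕ) ≤ (α:ℕ) → u i = y i) ∧
       (∀ i : Fin (n+1), (α:ℕ) < (i:ℕ) → v i = y i)) ↔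
      ((∀ i : Fin (n+1), (i:ℕ) ≤ (α:ℕ) → u i = x i) ∧
       (∀ i : Fin (n+1), (α:ℕ) < (i:ℕ) → (i:ℕ) ≤ (β:ℕ) → v i = x i) ∧
       y = (fun u v => fun i : Fin (n+1) =>
          if (i:ℕ) ≤ (β:ℕ) then x i else v i) u v) := by
    intro y u v
    constructor
    · rintro ⟨h1, h2, h3⟩
      refine ⟨fun i hi => (h2 i hi).trans (h1 i (le_trans hi hαβ)),
        fun i hi1 hi2 => (h3 i hi1).trans (h1 i hi2), funext fun i => ?_⟩
      by_cases hi : (i:ℕ) ≤ (β:ℕ)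
      · simp only [if_pos hi]; exact h1 i hi
      · simp only [if_neg hi]; exact (h3 i (by omega)).symm
    · rintro ⟨hP, hQ, rfl⟩
      refine ⟨fun i hi => by simp only [if_pos hi], fun i hi => ?_, fun i hi => ?_⟩
      · simp only [if_pos (le_trans hi hαβ)]; exact hP i hi
      · by_cases hib : (i:ℕ) ≤ (β:ℕ)
        · simp only [if_pos hib]; exact hQ i hi hib
        · simp only [if_neg hib]
  have hk := key ω (mass ω)⁻¹ _ _ _ _ _ _ h
  show (∑ y : (∀ i, X i),
      if ∀ i : Fin (n+1), (i:ℕ) ≤ (β:ℕ) → y i = x i then reco α ω y else 0) = _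
  rw [show (∑ y : (∀ i, X i),
      if ∀ i : Fin (n+1), (i:ℕ) ≤ (β:ℕ) → y i = x i then reco α ω y else 0)
    = ∑ y : (∀ i, X i), (if ∀ i : Fin (n+1), (i:ℕ) ≤ (β:ℕ) → y i = x i then
      (mass ω)⁻¹ * ((∑ u, if ∀ i : Fin (n+1), (i:ℕ) ≤ (α:ℕ) → u i = y i then ω u else 0) *
        (∑ v, if ∀ i : Fin (n+1), (α:ℕ) < (i:ℕ) → v i = y i then ω v else 0)) else 0) from rfl,
    hk]
  rfl

private lemma margGt_reco_ge (ω : (∀ i, X i) → ℝ) (α β : Fin n) (hαβ : (α:ℕ) ≤ (β:ℕ))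
    (x : ∀ i, X i) :
    margGt β (reco α ω) x = (mass ω)⁻¹ * (mass ω * margGt β ω x) := by
  have h : ∀ y u v : (∀ i, X i),
      ((∀ i : Fin (n+1), (β:ℕ) < (i:ℕ) → y i = x i) ∧
       (∀ i : Fin (n+1), (i:ℕ) ≤ (α:ℕ) → u i = y i) ∧
       (∀ i : Fin (n+1), (α:ℕ) < (i:ℕ) → v i = y i)) ↔
      (True ∧
       (∀ i : Fin (n+1), (β:ℕ) < (i:ℕ) → v i = x i) ∧
       y = (fun u v => fun i : Fin (n+1) =>
          if (i:ℕ) ≤ (α:ℕ) then u i else v i) u v) := by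
    intro y u v
    constructor
    · rintro ⟨h1, h2, h3⟩
      refine ⟨trivial, fun i hi => (h3 i (by omega)).trans (h1 i hi), funext fun i => ?_⟩
      by_cases hi : (i:ℕ) ≤ (α:ℕ)
      · simp only [if_pos hi]; exact (h2 i hi).symm
      · simp only [if_neg hi]; exact (h3 i (by omega)).symm
    · rintro ⟨-, hQ, rfl⟩
      refine ⟨fun i hi => ?_, fun i hi => by simp only [if_pos hi],
        fun i hi => by simp only [if_neg (by omega : ¬ (i:ℕ) ≤ (α:ℕ))]⟩
      simp only [if_neg (by omega : ¬ (i:ℕ) ≤ (α:ℕ))]; exact hQ i hi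
  have hk := key ω (mass ω)⁻¹ _ _ _ _ _ _ h
  show (∑ y : (∀ i, X i),
      if ∀ i : Fin (n+1), (β:ℕ) < (i:ℕ) → y i = x i then reco α ω y else 0) = _
  rw [show (∑ y : (∀ i, X i),
      if ∀ i : Fin (n+1), (β:ℕ) < (i:ℕ) → y i = x i then reco α ω y else 0)
    = ∑ y : (∀ i, X i), (if ∀ i : Fin (n+1), (β:ℕ) < (i:ℕ) → y i = x i then
      (mass ω)⁻¹ * ((∑ u, if ∀ i : Fin (n+1), (i:ℕ) ≤ (α:ℕ) → u i = y i then ω u else 0) *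
        (∑ v, if ∀ i : Fin (n+1), (α:ℕ) < (i:ℕ) → v i = y i then ω v else 0)) else 0) from rfl,
    hk]
  simp only [if_true]
  rfl

private lemma reco_comm_le (ω : (∀ i, X i) → ℝ) (hm : mass ω ≠ 0) (α β : Fin n)
    (hαβ : (α:ℕ) ≤ (β:ℕ)) : reco α (reco β ω) = reco β (reco α ω) := by
  funext x
  have e2 := margLe_reco_le ω α β hαβ x
  have e3 := margGt_reco_le ω α β hαβ x
  have e4 := margLe_reco_ge ω α β hαβ x
  have e5 := margGt_reco_ge ω α β hαβ x
  show (mass (reco β ω))⁻¹ * (margLe α (reco β ω) x * margGt α (reco β ω) x)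
     = (mass (reco α ω))⁻¹ * (margLe β (reco α ω) x * margGt β (reco α ω) x)
  rw [mass_reco ω hm β, mass_reco ω hm α, e2, e3, e4, e5]
  ring


end Aux

theorem reco_comm {X : Fin (n+1) → Type*} [∀ i, Fintype (X i)] [∀ i, DecidableEq (X i)]
    [∀ i, Nonempty (X i)]
    (ω : (∀ i, X i) → ℝ) (hω : ∀ x, 0 ≤ ω x) (hm : mass ω ≠ 0) (α β : Fin n) :
    reco α (reco β ω) = reco β (reco α ω) := by
  rcases le_total α β with hab | hab
  · exact reco_comm_le ω hm α β hab
  · exact (reco_comm_le ω hm β α hab).symm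
end

section
/- The complete product measure is a fixed point: for $\omega$ a nonnegative measure with $\|\omega\| > 0$, the measure $\omega_\infty := \frac{1}{\|\omega\|^{n-1}} \bigotimes_{i=0}^n (\pi_i.\omega)$ (i.e., $\omega_\infty(x) = \|\omega\|^{1-n}\prod_{i=0}^n (\pi_i.\omega)(x_i)$) satisfies $R_\alpha(\omega_\infty) = \omega_\infty$ for every link $\alpha \in L$. -/
open Finset

variable {n : ℕ}

section Aux

variable {X : Fin (n+1) → Type*} [∀ i, Fintype (X i)] [∀ i, DecidableEq (X i)]

lemma constrained_sum_aux (P : Fin (n+1) → Prop) [DecidablePred P]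
    (g : ∀ i, X i → ℝ) (x : ∀ i, X i) :
    ∑ y : ∀ i, X i, (if ∀ i, P i → y i = x i then ∏ i, g i (y i) else 0)
      = ∏ i, (if P i then g i (x i) else ∑ u, g i u) := by
  have h1 : ∀ y : ∀ i, X i,
      (if ∀ i, P i → y i = x i then ∏ i, g i (y i) else 0)
        = ∏ i, (if P i → y i = x i then g i (y i) else 0) := by
    intro y
    by_cases h : ∀ i, P i → y i = x i
    · rw [if_pos h]
      exact Finset.prod_congr rfl fun i _ => (if_pos (h i)).symm
    · push_neg at h
      obtain ⟨i, hPi, hne⟩ := h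
      rw [if_neg (by tauto), Finset.prod_eq_zero (Finset.mem_univ i)]
      rw [if_neg (by tauto)]
  simp_rw [h1]
  rw [← Fintype.prod_sum (fun i (u : X i) => if P i → u = x i then g i u else 0)]
  refine Finset.prod_congr rfl fun i _ => ?_
  by_cases hP : P i
  · simp [hP, Finset.sum_ite_eq']
  · simp [hP]

omit [∀ i, DecidableEq (X i)] in
lemma sum_prod_aux (g : ∀ i, X i → ℝ) :
    ∑ y : ∀ i, X i, ∏ i, g i (y i) = ∏ i, ∑ u, g i u :=
  (Fintype.prod_sum g).symm

end Aux

theorem reco_fixes_product_measure {X : Fin (n+1) → Type*} [∀ i, Fintype (X i)]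
    [∀ i, DecidableEq (X i)] [∀ i, Nonempty (X i)]
    (ω : (∀ i, X i) → ℝ) (hω : ∀ x, 0 ≤ ω x) (hm : 0 < mass ω)
    (ωinf : (∀ i, X i) → ℝ)
    (hinf : ∀ x, ωinf x = (mass ω) ^ ((1 : ℤ) - n) * ∏ i, margAt i ω x)
    (α : Fin n) :
    reco α ωinf = ωinf := by
  have hM : mass ω ≠ 0 := ne_of_gt hm
  set M := mass ω with hMdef
  set g : ∀ i, X i → ℝ := fun i u => ∑ y, if y i = u then ω y else 0 with hg
  have hmarg : ∀ (i) (x : ∀ i, X i), margAt i ω x = g i (x i) := fun i x => rfl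
  have hsumg : ∀ i, ∑ u, g i u = M := by
    intro i
    rw [hg]
    rw [Finset.sum_comm]
    simp [hMdef, mass]
  have hωinf : ∀ x, ωinf x = M ^ ((1:ℤ) - n) * ∏ i, g i (x i) := by
    intro x; rw [hinf]; simp only [hmarg]
  have hmass : mass ωinf = M ^ ((1:ℤ) - n) * M ^ (n+1) := by
    simp only [mass, hωinf, ← Finset.mul_sum]
    rw [sum_prod_aux]
    simp [hsumg]
  have hLe : ∀ x, margLe α ωinf x
      = M ^ ((1:ℤ) - n) * ∏ i : Fin (n+1), (if (i : ℕ) ≤ (α : ℕ) then g i (x i) else M) := by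
    intro x
    have hy : ∀ y : ∀ i, X i,
        (if ∀ i : Fin (n+1), (i : ℕ) ≤ (α : ℕ) → y i = x i then ωinf y else 0)
          = M ^ ((1:ℤ) - n) *
            (if ∀ i : Fin (n+1), (i : ℕ) ≤ (α : ℕ) → y i = x i
              then ∏ i, g i (y i) else 0) := by
      intro y; rw [hωinf y]; split <;> simp
    rw [margLe]
    simp_rw [hy]
    rw [← Finset.mul_sum, constrained_sum_aux (fun i : Fin (n+1) => (i : ℕ) ≤ (α : ℕ)) g x]
    simp [hsumg]
  have hGt : ∀ x, margGt α ωinf x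
      = M ^ ((1:ℤ) - n) * ∏ i : Fin (n+1), (if (α : ℕ) < (i : ℕ) then g i (x i) else M) := by
    intro x
    have hy : ∀ y : ∀ i, X i,
        (if ∀ i : Fin (n+1), (α : ℕ) < (i : ℕ) → y i = x i then ωinf y else 0)
          = M ^ ((1:ℤ) - n) *
            (if ∀ i : Fin (n+1), (α : ℕ) < (i : ℕ) → y i = x i
              then ∏ i, g i (y i) else 0) := by
      intro y; rw [hωinf y]; split <;> simp
    rw [margGt]
    simp_rw [hy]
    rw [← Finset.mul_sum, constrained_sum_aux (fun i : Fin (n+1) => (α : ℕ) < (i : ℕ)) g x]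
    simp [hsumg]
  funext x
  have hprod : (∏ i : Fin (n+1), (if (i : ℕ) ≤ (α : ℕ) then g i (x i) else M))
      * (∏ i : Fin (n+1), (if (α : ℕ) < (i : ℕ) then g i (x i) else M))
      = M ^ (n+1) * ∏ i, g i (x i) := by
    rw [← Finset.prod_mul_distrib]
    rw [show (M : ℝ) ^ (n+1) = ∏ _i : Fin (n+1), M by simp]
    rw [← Finset.prod_mul_distrib]
    refine Finset.prod_congr rfl fun i _ => ?_
    by_cases h : (i : ℕ) ≤ (α : ℕ)
    · rw [if_pos h, if_neg (by omega), mul_comm]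
    · rw [if_neg h, if_pos (by omega)]
  rw [reco, hmass, hLe, hGt, hωinf]
  rw [mul_mul_mul_comm, hprod]
  have h2 : (M : ℝ) ^ ((1:ℤ) - n) = M * (M ^ n)⁻¹ := by
    rw [zpow_sub₀ hM, zpow_one, zpow_natCast, div_eq_mul_inv]
  rw [h2]
  have hne : (M : ℝ) ^ n ≠ 0 := pow_ne_zero _ hM
  field_simp
end

section
/- In the discrete-time single-crossover dynamics, the coefficient recursion preserves normalization: if $\sum_{G \subseteq L} \tilde a_G(t) = 1$ and all $\tilde a_G(t) \geq 0$, then the updated coefficients $\tilde a_G(t+1) = \eta\, \tilde a_G(t) + \sum_{\alpha \in G} \tilde\varrho_\alpha \big(\sum_{H \subseteq L_{\geq\alpha}} \tilde a_{G_{<\alpha} \cup H}(t)\big)\big(\sum_{K \subseteq L_{\leq\alpha}} \tilde a_{K \cup G_{>\alpha}}(t)\big)$ satisfy $\sum_{G \subseteq L} \tilde a_G(t+1) = 1$ and $\tilde a_G(t+1) \geq 0$. -/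
open Finset

private lemma sum_powerset_union_disjoint {L : Type*} [DecidableEq L] (s t : Finset L)
    (h : Disjoint s t) (f : Finset L → ℝ) :
    ∑ p ∈ s.powerset ×ˢ t.powerset, f (p.1 ∪ p.2) = ∑ u ∈ (s ∪ t).powerset, f u := by
  apply Finset.sum_nbij' (i := fun p => p.1 ∪ p.2) (j := fun u => (u ∩ s, u ∩ t))
  · rintro ⟨A, B⟩ hp
    simp only [mem_product, mem_powerset] at hp ⊢
    exact union_subset_union hp.1 hp.2
  · intro u hu
    simp only [mem_product, mem_powerset]
    exact ⟨inter_subset_right, inter_subset_right⟩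
  · rintro ⟨A, B⟩ hp
    simp only [mem_product, mem_powerset] at hp
    have hA : A ∩ s = A := inter_eq_left.mpr hp.1
    have hB : B ∩ t = B := inter_eq_left.mpr hp.2
    have hAt : A ∩ t = ∅ := by
      rw [← subset_empty]
      intro x hx
      simp only [mem_inter] at hx
      exact absurd rfl (h.forall_ne_finset (hp.1 hx.1) hx.2)
    have hBs : B ∩ s = ∅ := by
      rw [← subset_empty]
      intro x hx
      simp only [mem_inter] at hx
      exact absurd rfl (h.forall_ne_finset hx.2 (hp.2 hx.1))
    simp [union_inter_distrib_right, hA, hB, hAt, hBs]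
  · intro u hu
    simp only [mem_powerset] at hu
    simp [← inter_union_distrib_left, inter_eq_left.mpr hu]
  · intros; rfl

theorem discrete_recursion_preserves_normalisation {L : Type*} [Fintype L] [LinearOrder L]
    (ρ : L → ℝ) (hρ : ∀ α, 0 < ρ α) (hsum : ∑ α, ρ α ≤ 1)
    (a : Finset L → ℝ) (ha : ∀ G, 0 ≤ a G)
    (hnorm : ∑ G ∈ (Finset.univ : Finset L).powerset, a G = 1)
    (a' : Finset L → ℝ)
    (ha' : ∀ G : Finset L, a' G = (1 - ∑ α, ρ α) * a G +
      ∑ α ∈ G, ρ α *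
        (∑ H ∈ (Finset.univ.filter (fun β => α ≤ β)).powerset,
          a (G.filter (fun β => β < α) ∪ H)) *
        (∑ K ∈ (Finset.univ.filter (fun β => β ≤ α)).powerset,
          a (K ∪ G.filter (fun β => α < β)))) :
    (∑ G ∈ (Finset.univ : Finset L).powerset, a' G = 1) ∧ ∀ G, 0 ≤ a' G := by
  classical
  -- abbreviations
  set Lge : L → Finset L := fun α => Finset.univ.filter (fun β => α ≤ β) with hLge
  set Lle : L → Finset L := fun α => Finset.univ.filter (fun β => β ≤ α) with hLle
  set Llt : L → Finset L := fun α => Finset.univ.filter (fun β => β < α) with hLlt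
  set Lgt : L → Finset L := fun α => Finset.univ.filter (fun β => α < β) with hLgt
  -- the two normalisation facts
  have key1 : ∀ α : L, ∑ A ∈ (Llt α).powerset, ∑ H ∈ (Lge α).powerset, a (A ∪ H) = 1 := by
    intro α
    rw [← Finset.sum_product']
    rw [sum_powerset_union_disjoint]
    · have : Llt α ∪ Lge α = Finset.univ := by
        ext β; simp [hLlt, hLge, lt_or_ge]
      rw [this]; exact hnorm
    · simp only [hLlt, hLge, disjoint_filter_filter']
      rw [Finset.disjoint_filter]
      intro x _ hx
      exact not_le.mpr hx
  have key2 : ∀ α : L, ∑ B ∈ (Lgt α).powerset, ∑ K ∈ (Lle α).powerset, a (K ∪ B) = 1 := by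
    intro α
    rw [Finset.sum_comm, ← Finset.sum_product']
    rw [sum_powerset_union_disjoint]
    · have : Lle α ∪ Lgt α = Finset.univ := by
        ext β; simp [hLle, hLgt, le_or_gt]
      rw [this]; exact hnorm
    · rw [Finset.disjoint_filter]
      intro x _ hx
      exact not_lt.mpr hx
  -- nonnegativity
  have hnn : ∀ G, 0 ≤ a' G := by
    intro G
    rw [ha' G]
    have h1 : (0:ℝ) ≤ 1 - ∑ α, ρ α := by linarith
    apply add_nonneg (mul_nonneg h1 (ha G))
    apply Finset.sum_nonneg
    intro α _
    apply mul_nonneg (mul_nonneg (hρ α).le _) _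
    · exact Finset.sum_nonneg fun H _ => ha _
    · exact Finset.sum_nonneg fun K _ => ha _
  refine ⟨?_, hnn⟩
  -- the sum
  have hnorm' : ∑ G : Finset L, a G = 1 := by
    rw [← hnorm, Finset.powerset_univ]
  rw [Finset.powerset_univ]
  simp_rw [ha']
  rw [Finset.sum_add_distrib, ← Finset.mul_sum, hnorm', mul_one]
  -- swap the double sum
  have hswap : ∀ (f : L → Finset L → ℝ),
      ∑ G : Finset L, ∑ α ∈ G, f α G =
      ∑ α : L, ∑ G ∈ Finset.univ.filter (fun G : Finset L => α ∈ G), f α G := by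
    intro f
    have : ∀ G : Finset L, ∑ α ∈ G, f α G = ∑ α : L, if α ∈ G then f α G else 0 := by
      intro G
      rw [← Finset.sum_filter, Finset.filter_univ_mem]
    simp_rw [this]
    rw [Finset.sum_comm]
    congr 1
    ext α
    rw [Finset.sum_filter]
  rw [hswap]
  have hfix : ∀ α : L,
      ∑ G ∈ Finset.univ.filter (fun G : Finset L => α ∈ G),
        (ρ α * (∑ H ∈ (Lge α).powerset, a (G.filter (fun β => β < α) ∪ H)) *
          (∑ K ∈ (Lle α).powerset, a (K ∪ G.filter (fun β => α < β)))) = ρ α := by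
    intro α
    have hbij : ∑ G ∈ Finset.univ.filter (fun G : Finset L => α ∈ G),
        (ρ α * (∑ H ∈ (Lge α).powerset, a (G.filter (fun β => β < α) ∪ H)) *
          (∑ K ∈ (Lle α).powerset, a (K ∪ G.filter (fun β => α < β)))) =
        ∑ p ∈ (Llt α).powerset ×ˢ (Lgt α).powerset,
        (ρ α * (∑ H ∈ (Lge α).powerset, a (p.1 ∪ H)) *
          (∑ K ∈ (Lle α).powerset, a (K ∪ p.2))) := by
      apply Finset.sum_nbij'
        (i := fun G => (G.filter (fun β => β < α), G.filter (fun β => α < β)))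
        (j := fun p => insert α (p.1 ∪ p.2))
      · intro G hG
        simp only [Finset.mem_product, Finset.mem_powerset]
        exact ⟨Finset.filter_subset_filter _ (Finset.subset_univ G),
               Finset.filter_subset_filter _ (Finset.subset_univ G)⟩
      · intro p hp
        simp
      · intro G hG
        simp only [Finset.mem_filter] at hG
        ext β
        simp only [Finset.mem_insert, Finset.mem_union, Finset.mem_filter]
        constructor
        · rintro (rfl | ⟨⟨h1, _⟩ | ⟨h1, _⟩⟩)
          · exact hG.2
          · exact h1
          · exact h1
        · intro hβ
          rcases lt_trichotomy β α with h | h | h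
          · exact Or.inr (Or.inl ⟨hβ, h⟩)
          · exact Or.inl h
          · exact Or.inr (Or.inr ⟨hβ, h⟩)
      · rintro ⟨A, B⟩ hp
        simp only [Finset.mem_product, Finset.mem_powerset, hLlt, hLgt] at hp
        have hA : ∀ β ∈ A, β < α := fun β hβ => (Finset.mem_filter.mp (hp.1 hβ)).2
        have hB : ∀ β ∈ B, α < β := fun β hβ => (Finset.mem_filter.mp (hp.2 hβ)).2
        have e1 : (insert α (A ∪ B)).filter (fun β => β < α) = A := by
          ext β
          simp only [Finset.mem_filter, Finset.mem_insert, Finset.mem_union]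
          constructor
          · rintro ⟨rfl | h | h, hlt⟩
            · exact absurd hlt (lt_irrefl _)
            · exact h
            · exact absurd hlt (not_lt.mpr (hB β h).le)
          · intro h
            exact ⟨Or.inr (Or.inl h), hA β h⟩
        have e2 : (insert α (A ∪ B)).filter (fun β => α < β) = B := by
          ext β
          simp only [Finset.mem_filter, Finset.mem_insert, Finset.mem_union]
          constructor
          · rintro ⟨rfl | h | h, hlt⟩
            · exact absurd hlt (lt_irrefl _)
            · exact absurd hlt (not_lt.mpr (hA β h).le)
            · exact h
          · intro h
            exact ⟨Or.inr (Or.inr h), hB β h⟩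
        simp [e1, e2]
      · intro G hG
        rfl
    rw [hbij, Finset.sum_product]
    have hinner : ∀ A ∈ (Llt α).powerset,
        ∑ B ∈ (Lgt α).powerset,
          (ρ α * (∑ H ∈ (Lge α).powerset, a (A ∪ H)) *
            (∑ K ∈ (Lle α).powerset, a (K ∪ B))) =
        ρ α * (∑ H ∈ (Lge α).powerset, a (A ∪ H)) := by
      intro A _
      rw [← Finset.mul_sum, key2 α, mul_one]
    rw [Finset.sum_congr rfl hinner, ← Finset.mul_sum, key1 α, mul_one]
  rw [Finset.sum_congr rfl (fun α _ => hfix α)]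
  ring
end
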